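/- arXiv:2207.11656 — 5 statements merged into one kernel-verified Lean document; each statement's English description precedes it below -/
import Mathlib

section
/- Under Assumption 1 (linear price sensitivity), for any pricing policy (p_i)_{i≥0} with p_0 = p_max making the server birth–death chain positive recurrent (i.e., ∑_j h_j < ∞), the average stationary price satisfies ∑_{i≥0} π_i p_i = (β − π_0 μ_0 − λ)/α, where μ_0 = g(p_max) = β − α p_max. Consequently, C_rel = (β − π_0 μ_0 − λ)/α − w ∑_{i≥1} i π_i. -/
/-- `hseq ρ i = ∏_{j=1}^i ρ_j`, with `hseq ρ 0 = 1`. -/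
noncomputable def hseq (ρ : ℕ → ℝ) (i : ℕ) : ℝ := ∏ j ∈ Finset.Icc 1 i, ρ j

/-- Stationary distribution `π_i = h_i / ∑_j h_j` of the birth–death chain. -/
noncomputable def piseq (ρ : ℕ → ℝ) (i : ℕ) : ℝ := hseq ρ i / ∑' j, hseq ρ j

/-!
Writing the linear price law as `p_i = (β - μ_i) / α`, the average price is
`(β - ∑ π_i μ_i) / α`. The balance equations `π_{i+1} μ_{i+1} = λ π_i` turn the tail of
`∑ π_i μ_i` into `λ ∑ π_i = λ`, so only the boundary term `π_0 μ_0` survives.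
-/

theorem Summable.mul_of_abs_le {ι : Type*} {f g : ι → ℝ} {C : ℝ} (hf : Summable f)
    (hg : ∀ i, |g i| ≤ C) : Summable fun i => f i * g i :=
  (hf.abs.mul_right C).of_norm_bounded fun i => by
    rw [Real.norm_eq_abs, abs_mul]
    exact mul_le_mul_of_nonneg_left (hg i) (abs_nonneg _)

section BirthDeath

variable {ρ : ℕ → ℝ}

theorem hseq_succ (i : ℕ) : hseq ρ (i + 1) = hseq ρ i * ρ (i + 1) :=
  Finset.prod_Icc_succ_top (Nat.le_add_left 1 i) ρ

theorem hseq_pos (hρ : ∀ i, 0 < ρ i) (i : ℕ) : 0 < hseq ρ i :=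
  Finset.prod_pos fun j _ => hρ j

theorem tsum_piseq (hS : ∑' j, hseq ρ j ≠ 0) : ∑' i, piseq ρ i = 1 := by
  simp only [piseq]
  rw [tsum_div_const, div_self hS]

theorem piseq_succ_mul {μ : ℕ → ℝ} {lam : ℝ} {i : ℕ} (hbal : ρ (i + 1) * μ (i + 1) = lam) :
    piseq ρ (i + 1) * μ (i + 1) = lam * piseq ρ i := by
  simp only [piseq, hseq_succ, ← hbal]
  ring

theorem tsum_piseq_mul_eq {μ : ℕ → ℝ} {lam : ℝ} (hbal : ∀ i, ρ (i + 1) * μ (i + 1) = lam)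
    (hs : Summable fun i => piseq ρ i * μ i) :
    ∑' i, piseq ρ i * μ i = piseq ρ 0 * μ 0 + lam * ∑' i, piseq ρ i := by
  rw [hs.tsum_eq_zero_add, ← tsum_mul_left]
  exact congrArg _ (tsum_congr fun i => piseq_succ_mul (hbal i))

end BirthDeath

theorem stmt0_general
    (lam alpha beta wt pmin pmax : ℝ)
    (hlam : 0 < lam) (halpha : 0 < alpha)
    (hmumin : 0 < beta - alpha * pmax)
    (p : ℕ → ℝ)
    (hp : ∀ i, p i ∈ Set.Icc pmin pmax)
    (μ : ℕ → ℝ) (hμ : ∀ i, μ i = beta - alpha * p i)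
    (ρ : ℕ → ℝ) (hρ : ∀ i, ρ i = lam / μ i)
    (hsum : Summable (hseq ρ)) :
    (∑' i, piseq ρ i * p i) = (beta - piseq ρ 0 * μ 0 - lam) / alpha ∧
    (∑' i, piseq ρ i * p i) - (wt / lam) * (∑' i : ℕ, (i : ℝ) * piseq ρ i)
      = (beta - piseq ρ 0 * μ 0 - lam) / alpha
          - (wt / lam) * (∑' i : ℕ, (i : ℝ) * piseq ρ i) := by
  have hμ_pos (i : ℕ) : 0 < μ i := by
    rw [hμ]; nlinarith [(hp i).2]
  have hμ_le (i : ℕ) : |μ i| ≤ beta - alpha * pmin := by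
    rw [abs_of_pos (hμ_pos i), hμ]; nlinarith [(hp i).1]
  have hbal (i : ℕ) : ρ (i + 1) * μ (i + 1) = lam := by
    rw [hρ, div_mul_cancel₀ _ (hμ_pos _).ne']
  have hρ_pos (i : ℕ) : 0 < ρ i := by
    rw [hρ]; exact div_pos hlam (hμ_pos i)
  have hS : ∑' j, hseq ρ j ≠ 0 :=
    (hsum.tsum_pos (fun i => (hseq_pos hρ_pos i).le) 0 (hseq_pos hρ_pos 0)).ne'
  have hπ : Summable (piseq ρ) := hsum.div_const _
  have hπμ := tsum_piseq_mul_eq hbal (hπ.mul_of_abs_le hμ_le)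
  have hprice (i : ℕ) : piseq ρ i * p i = (beta * piseq ρ i - piseq ρ i * μ i) / alpha := by
    rw [hμ]; field_simp; ring
  have havg : ∑' i, piseq ρ i * p i = (beta - piseq ρ 0 * μ 0 - lam) / alpha := by
    rw [tsum_congr hprice, tsum_div_const, (hπ.mul_left beta).tsum_sub (hπ.mul_of_abs_le hμ_le),
      tsum_mul_left, hπμ, tsum_piseq hS]
    ring
  exact ⟨havg, by rw [havg]⟩

/-- Under Assumption 1 (linear price sensitivity `g(p) = β - αp`,
with `μ_max = β - α p_min > λ` and `μ_min = β - α p_max > 0`), for any pricing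
policy `(p_i)` with values in `[p_min, p_max]`, `p_0 = p_max`, making the server
birth–death chain (with `μ_i = g(p_i)`, `ρ_i = λ/μ_i`) positive recurrent,
the average stationary price satisfies
`∑_i π_i p_i = (β - π_0 μ_0 - λ)/α`, and consequently
`C_rel = (β - π_0 μ_0 - λ)/α - w ∑_i i π_i` where `w = w̃/λ`. -/
theorem stmt0
    (lam alpha beta wt pmin pmax : ℝ)
    (hlam : 0 < lam) (halpha : 0 < alpha) (hbeta : 0 < beta) (hwt : 0 < wt)
    (hpmin : 0 < pmin) (hpminmax : pmin < pmax)
    (hmumax : lam < beta - alpha * pmin)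
    (hmumin : 0 < beta - alpha * pmax)
    (p : ℕ → ℝ)
    (hp : ∀ i, p i ∈ Set.Icc pmin pmax)
    (hp0 : p 0 = pmax)
    (μ : ℕ → ℝ) (hμ : ∀ i, μ i = beta - alpha * p i)
    (ρ : ℕ → ℝ) (hρ : ∀ i, ρ i = lam / μ i)
    (hsum : Summable (hseq ρ)) :
    (∑' i, piseq ρ i * p i) = (beta - piseq ρ 0 * μ 0 - lam) / alpha ∧
    (∑' i, piseq ρ i * p i) - (wt / lam) * (∑' i : ℕ, (i : ℝ) * piseq ρ i)
      = (beta - piseq ρ 0 * μ 0 - lam) / alpha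
          - (wt / lam) * (∑' i : ℕ, (i : ℝ) * piseq ρ i) :=
  stmt0_general lam alpha beta wt pmin pmax hlam halpha hmumin p hp μ hμ ρ hρ hsum
end

section
/- Let 0 < ρ̲ < ρ̄ with ρ̲ < 1 and ρ̲/(1 − ρ̲) ≤ C. Consider the optimization: minimize π_0 over all sequences (ρ_i)_{i≥1} with ρ_i ∈ [ρ̲, ρ̄] for all i, subject to ∑_j h_j < ∞ and ∑_{i=0}^∞ i π_i ≤ C. Then an optimal solution exists of bang-bang form: there exist ℓ* ∈ ℕ ∪ {∞} and r* ∈ [ρ̲, ρ̄] such that ρ_i = ρ̄ for i < ℓ*, ρ_i = r* for i = ℓ*, and ρ_i = ρ̲ for i > ℓ*. -/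
/-- Feasibility for the optimization: `ρ_i ∈ [ρ̲, ρ̄]` for `i ≥ 1`, positive
recurrence `∑_j h_j < ∞`, and the moment constraint `∑_i i π_i ≤ C`
(with the series converging). -/
def Feasible (rlo rhi C : ℝ) (ρ : ℕ → ℝ) : Prop :=
  (∀ i : ℕ, 1 ≤ i → ρ i ∈ Set.Icc rlo rhi) ∧
    Summable (hseq ρ) ∧
    Summable (fun i : ℕ => (i : ℝ) * piseq ρ i) ∧
    (∑' i : ℕ, (i : ℝ) * piseq ρ i) ≤ C

open Finset

namespace BirthDeath

noncomputable def hsum (ρ : ℕ → ℝ) : ℝ := ∑' j, hseq ρ j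

noncomputable def mean (ρ : ℕ → ℝ) : ℝ := ∑' i : ℕ, (i : ℝ) * piseq ρ i

variable {ρ σ : ℕ → ℝ} {a b C : ℝ}

@[simp] lemma hseq_zero (ρ : ℕ → ℝ) : hseq ρ 0 = 1 := by simp [hseq]

lemma hseq_succ (ρ : ℕ → ℝ) (j : ℕ) : hseq ρ (j + 1) = hseq ρ j * ρ (j + 1) :=
  prod_Icc_succ_top (by omega) ρ

lemma hseq_nonneg (hρ : ∀ i, 1 ≤ i → 0 ≤ ρ i) (j : ℕ) : 0 ≤ hseq ρ j :=
  prod_nonneg fun i hi => hρ i (mem_Icc.1 hi).1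

lemma mem_Icc_zero_of_mem_Icc (hb : 0 ≤ b) (hρ : ∀ i, 1 ≤ i → ρ i ∈ Set.Icc b a) :
    ∀ i, 1 ≤ i → ρ i ∈ Set.Icc 0 a :=
  fun i hi => ⟨hb.trans (hρ i hi).1, (hρ i hi).2⟩

lemma hseq_le_pow (hρ : ∀ i, 1 ≤ i → ρ i ∈ Set.Icc 0 a) (j : ℕ) : hseq ρ j ≤ a ^ j :=
  calc hseq ρ j ≤ ∏ _i ∈ Icc 1 j, a :=
        prod_le_prod (fun i hi => (hρ i (mem_Icc.1 hi).1).1) fun i hi => (hρ i (mem_Icc.1 hi).1).2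
    _ = a ^ j := by simp

lemma hseq_const (c : ℝ) (j : ℕ) : hseq (fun _ => c) j = c ^ j := by simp [hseq]

lemma hsum_le_hsum_const (hρ : ∀ i, 1 ≤ i → ρ i ∈ Set.Icc 0 a) (hs : Summable (hseq ρ))
    (ha : Summable (hseq fun _ => a)) : hsum ρ ≤ hsum fun _ => a :=
  hs.tsum_le_tsum (fun j => (hseq_le_pow hρ j).trans_eq (hseq_const a j).symm) ha

lemma one_le_hsum (hρ : ∀ i, 1 ≤ i → 0 ≤ ρ i) (hs : Summable (hseq ρ)) : 1 ≤ hsum ρ := by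
  simpa [hsum] using hs.le_tsum 0 fun j _ => hseq_nonneg hρ j

lemma piseq_zero (ρ : ℕ → ℝ) : piseq ρ 0 = (hsum ρ)⁻¹ := by simp [piseq, hsum]

lemma piseq_succ (ρ : ℕ → ℝ) (j : ℕ) : piseq ρ (j + 1) = piseq ρ j * ρ (j + 1) := by
  simp only [piseq, hseq_succ]; ring

lemma piseq_nonneg (hρ : ∀ i, 1 ≤ i → 0 ≤ ρ i) (j : ℕ) : 0 ≤ piseq ρ j :=
  div_nonneg (hseq_nonneg hρ j) (tsum_nonneg (hseq_nonneg hρ))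

lemma hasSum_piseq (hρ : ∀ i, 1 ≤ i → 0 ≤ ρ i) (hs : Summable (hseq ρ)) :
    HasSum (piseq ρ) 1 := by
  have h := hs.hasSum.div_const (hsum ρ)
  rwa [← hsum, div_self (one_pos.trans_le (one_le_hsum hρ hs)).ne'] at h

lemma summable_mul_piseq (hm : Summable fun i : ℕ => (i : ℝ) * hseq ρ i) :
    Summable fun i : ℕ => (i : ℝ) * piseq ρ i := by
  have h := hm.div_const (hsum ρ)
  simp only [mul_div_assoc] at h
  exact h

lemma tsum_sub_mul_hseq (hρ : ∀ i, 1 ≤ i → 0 ≤ ρ i) (hs : Summable (hseq ρ))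
    (hm : Summable fun i : ℕ => (i : ℝ) * hseq ρ i) :
    ∑' j : ℕ, ((j : ℝ) - C) * hseq ρ j = hsum ρ * (mean ρ - C) := by
  have hS : hsum ρ ≠ 0 := (one_pos.trans_le (one_le_hsum hρ hs)).ne'
  have hmean : mean ρ = (∑' j : ℕ, (j : ℝ) * hseq ρ j) / hsum ρ := by
    simp only [mean, piseq, ← mul_div_assoc, tsum_div_const, hsum]
  simp_rw [sub_mul]
  rw [hm.tsum_sub (hs.mul_left C), tsum_mul_left, hmean]
  field_simp
  rfl

lemma feasible_iff (hb : 0 ≤ b) (hρ : ∀ i, 1 ≤ i → ρ i ∈ Set.Icc b a) (hs : Summable (hseq ρ))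
    (hm : Summable fun i : ℕ => (i : ℝ) * hseq ρ i) :
    Feasible b a C ρ ↔ ∑' j : ℕ, ((j : ℝ) - C) * hseq ρ j ≤ 0 := by
  have hρ0 i hi : 0 ≤ ρ i := hb.trans (hρ i hi).1
  have hS : 0 < hsum ρ := one_pos.trans_le (one_le_hsum hρ0 hs)
  rw [tsum_sub_mul_hseq hρ0 hs hm, ← mul_zero (hsum ρ), mul_le_mul_iff_right₀ hS, sub_nonpos]
  exact ⟨fun h => h.2.2.2, fun h => ⟨hρ, hs, summable_mul_piseq hm, h⟩⟩

lemma exists_crossing {p q : ℕ → ℝ} (hp : Summable p) (hq : Summable q)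
    (hpq : ∑' j, p j = ∑' j, q j) (hstep : ∀ j, p j < q j → p (j + 1) < q (j + 1)) :
    ∃ m, (∀ j < m, q j ≤ p j) ∧ ∀ j, m ≤ j → p j ≤ q j := by
  classical
  by_cases h : ∃ j, p j < q j
  · have hafter : ∀ j, Nat.find h ≤ j → p j < q j := fun j hj => by
      induction j, hj using Nat.le_induction with
      | base => exact Nat.find_spec h
      | succ k _ ih => exact hstep k ih
    exact ⟨Nat.find h, fun j hj => not_lt.1 (Nat.find_min h hj), fun j hj => (hafter j hj).le⟩
  · simp only [not_exists, not_lt] at h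
    refine ⟨0, by simp, fun j _ => not_lt.1 fun hlt => ?_⟩
    exact (hq.tsum_lt_tsum h hlt hp).ne' hpq

/-- Since both sequences have the same sum, `∑ j (q j - p j) = ∑ (j - m) (q j - p j)`, and every
term of the latter is nonnegative. -/
lemma tsum_mul_le_of_crossing {p q : ℕ → ℝ} (hp : Summable p) (hq : Summable q)
    (hpm : Summable fun j : ℕ => (j : ℝ) * p j) (hqm : Summable fun j : ℕ => (j : ℝ) * q j)
    (hpq : ∑' j, p j = ∑' j, q j) {m : ℕ} (hlt : ∀ j < m, q j ≤ p j)
    (hge : ∀ j, m ≤ j → p j ≤ q j) :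
    ∑' j : ℕ, (j : ℝ) * p j ≤ ∑' j : ℕ, (j : ℝ) * q j := by
  have key : HasSum (fun j : ℕ => ((j : ℝ) - m) * (q j - p j))
      ((∑' j : ℕ, (j : ℝ) * q j - ∑' j : ℕ, (j : ℝ) * p j) - m * (∑' j, q j - ∑' j, p j)) := by
    have hf : (fun j : ℕ => ((j : ℝ) - m) * (q j - p j))
        = fun j : ℕ => ((j : ℝ) * q j - j * p j) - m * (q j - p j) := by
      funext j; ring
    rw [hf]
    exact (hqm.hasSum.sub hpm.hasSum).sub ((hq.hasSum.sub hp.hasSum).mul_left (m : ℝ))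
  have hnonneg : ∀ j : ℕ, 0 ≤ ((j : ℝ) - m) * (q j - p j) := fun j => by
    rcases lt_or_ge j m with h | h
    · exact mul_nonneg_of_nonpos_of_nonpos (by simpa using h.le) (by linarith [hlt j h])
    · exact mul_nonneg (by simpa using h) (by linarith [hge j h])
  have := key.nonneg hnonneg
  rw [hpq, sub_self, mul_zero, sub_zero] at this
  linarith

lemma mean_le_mean (hρ : ∀ i, 1 ≤ i → 0 ≤ ρ i) (hσ : ∀ i, 1 ≤ i → 0 < σ i)
    (hρs : Summable (hseq ρ)) (hσs : Summable (hseq σ))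
    (hρm : Summable fun i : ℕ => (i : ℝ) * piseq ρ i)
    (hσm : Summable fun i : ℕ => (i : ℝ) * piseq σ i)
    (hstep : ∀ j, piseq ρ j < piseq σ j → ρ (j + 1) ≤ σ (j + 1)) :
    mean ρ ≤ mean σ := by
  have hp := hasSum_piseq hρ hρs
  have hq := hasSum_piseq (fun i hi => (hσ i hi).le) hσs
  have hpq : ∑' j, piseq ρ j = ∑' j, piseq σ j := hp.tsum_eq.trans hq.tsum_eq.symm
  obtain ⟨m, hlt, hge⟩ := exists_crossing hp.summable hq.summable hpq fun j hj => by
    rw [piseq_succ, piseq_succ]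
    calc piseq ρ j * ρ (j + 1) ≤ piseq ρ j * σ (j + 1) :=
          mul_le_mul_of_nonneg_left (hstep j hj) (piseq_nonneg hρ j)
      _ < piseq σ j * σ (j + 1) := mul_lt_mul_of_pos_right hj (hσ _ (by omega))
  exact tsum_mul_le_of_crossing hp.summable hq.summable hρm hσm hpq hlt hge

/-- In the notation of the theorem, `ℓ* = l + 1` and `r* = r`. -/
def bangBang (a b : ℝ) (l : ℕ) (r : ℝ) : ℕ → ℝ :=
  fun i => if i ≤ l then a else if i = l + 1 then r else b

variable {l : ℕ} {r : ℝ}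

lemma bangBang_mem (hba : b ≤ a) (hr : r ∈ Set.Icc b a) :
    ∀ i, 1 ≤ i → bangBang a b l r i ∈ Set.Icc b a := by
  intro i _
  unfold bangBang
  split_ifs
  exacts [⟨hba, le_rfl⟩, hr, ⟨le_rfl, hba⟩]

lemma bangBang_top (a b : ℝ) (l : ℕ) : bangBang a b l a = bangBang a b (l + 1) b := by
  funext i
  unfold bangBang
  split_ifs <;> first | rfl | omega

lemma hseq_bangBang_of_le {j : ℕ} (hj : j ≤ l) : hseq (bangBang a b l r) j = a ^ j := by
  have h : ∀ i ∈ Icc 1 j, bangBang a b l r i = a := fun i hi => if_pos ((mem_Icc.1 hi).2.trans hj)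
  rw [hseq, prod_congr rfl h]
  simp

lemma hseq_bangBang_add (k : ℕ) : hseq (bangBang a b l r) (k + (l + 1)) = a ^ l * r * b ^ k := by
  induction k with
  | zero =>
    rw [zero_add, hseq_succ, hseq_bangBang_of_le le_rfl]
    simp [bangBang]
  | succ k ih =>
    rw [show k + 1 + (l + 1) = k + (l + 1) + 1 by ring, hseq_succ, ih]
    simp only [bangBang]
    rw [if_neg (by omega), if_neg (by omega)]
    ring

lemma hseq_bangBang_affine (j : ℕ) :
    hseq (bangBang a b l r) j
      = (1 - r) * hseq (bangBang a b l 0) j + r * hseq (bangBang a b l 1) j := by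
  rcases le_or_gt j l with hj | hj
  · simp only [hseq_bangBang_of_le hj]; ring
  · obtain ⟨k, rfl⟩ : ∃ k, j = k + (l + 1) := ⟨j - (l + 1), by omega⟩
    simp only [hseq_bangBang_add]; ring

lemma summable_hseq_bangBang (hb0 : 0 ≤ b) (hb1 : b < 1) :
    Summable (hseq (bangBang a b l r)) ∧
      Summable fun j : ℕ => (j : ℝ) * hseq (bangBang a b l r) j := by
  have hgeom : Summable fun k : ℕ => b ^ k := summable_geometric_of_lt_one hb0 hb1
  have hmgeom : Summable fun k : ℕ => (k : ℝ) * b ^ k := by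
    simpa using summable_pow_mul_geometric_of_norm_lt_one 1 (by rwa [Real.norm_of_nonneg hb0])
  refine ⟨(summable_nat_add_iff (l + 1)).1 ?_, (summable_nat_add_iff (l + 1)).1 ?_⟩
  · simpa only [hseq_bangBang_add] using hgeom.mul_left (a ^ l * r)
  · have hf : (fun k : ℕ => ((k + (l + 1) : ℕ) : ℝ) * hseq (bangBang a b l r) (k + (l + 1)))
        = fun k : ℕ => a ^ l * r * ((k : ℝ) * b ^ k) + a ^ l * r * (l + 1) * b ^ k := by
      funext k; rw [hseq_bangBang_add]; push_cast; ring
    rw [hf]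
    exact (hmgeom.mul_left _).add (hgeom.mul_left _)

lemma mean_bangBang_le (hb0 : 0 < b) (hb1 : b < 1) (hr : 0 ≤ r)
    (hσ : ∀ i, 1 ≤ i → σ i ∈ Set.Icc b a) (hσs : Summable (hseq σ))
    (hσm : Summable fun i : ℕ => (i : ℝ) * piseq σ i)
    (hS : hsum (bangBang a b l r) ≤ hsum σ) : mean (bangBang a b l r) ≤ mean σ := by
  have hba : b ≤ a := (hσ 1 le_rfl).1.trans (hσ 1 le_rfl).2
  have hρ : ∀ i, 1 ≤ i → 0 ≤ bangBang a b l r i := fun i _ => by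
    unfold bangBang; split_ifs <;> linarith
  obtain ⟨hρs, hρm⟩ := summable_hseq_bangBang (a := a) (l := l) (r := r) hb0.le hb1
  refine mean_le_mean hρ (fun i hi => hb0.trans_le (hσ i hi).1) hρs hσs (summable_mul_piseq hρm)
    hσm fun j hj => ?_
  rcases le_or_gt j l with hjl | hjl
  · refine absurd hj (not_lt.2 ?_)
    calc piseq σ j = hseq σ j / hsum σ := rfl
      _ ≤ a ^ j / hsum (bangBang a b l r) :=
          div_le_div₀ (hseq_nonneg hρ j |>.trans_eq (hseq_bangBang_of_le hjl))
            (hseq_le_pow (mem_Icc_zero_of_mem_Icc hb0.le hσ) j)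
            (one_pos.trans_le (one_le_hsum hρ hρs)) hS
      _ = piseq (bangBang a b l r) j := by rw [← hseq_bangBang_of_le hjl]; rfl
  · have hbj : bangBang a b l r (j + 1) = b := by
      simp only [bangBang]; rw [if_neg (by omega), if_neg (by omega)]
    rw [hbj]
    exact (hσ _ (by omega)).1

lemma tsum_mul_hseq_bangBang {w : ℕ → ℝ}
    (h0 : Summable fun j => w j * hseq (bangBang a b l 0) j)
    (h1 : Summable fun j => w j * hseq (bangBang a b l 1) j) (r : ℝ) :
    ∑' j, w j * hseq (bangBang a b l r) j
      = (1 - r) * ∑' j, w j * hseq (bangBang a b l 0) j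
        + r * ∑' j, w j * hseq (bangBang a b l 1) j := by
  rw [← tsum_mul_left, ← tsum_mul_left, ← (h0.mul_left _).tsum_add (h1.mul_left _)]
  exact tsum_congr fun j => by rw [hseq_bangBang_affine (r := r) j]; ring

lemma hsum_bangBang (hb0 : 0 ≤ b) (hb1 : b < 1) (r : ℝ) :
    hsum (bangBang a b l r)
      = (1 - r) * hsum (bangBang a b l 0) + r * hsum (bangBang a b l 1) := by
  simpa [hsum] using tsum_mul_hseq_bangBang (w := fun _ => 1)
    (by simpa using (summable_hseq_bangBang hb0 hb1).1)
    (by simpa using (summable_hseq_bangBang hb0 hb1).1) r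

lemma exists_threshold_of_affine {φ₀ φ₁ : ℝ} (hba : b < a) (hb : (1 - b) * φ₀ + b * φ₁ ≤ 0)
    (ha : 0 < (1 - a) * φ₀ + a * φ₁) :
    ∃ r ∈ Set.Ico b a, (1 - r) * φ₀ + r * φ₁ ≤ 0 ∧ ∀ s, r < s → 0 < (1 - s) * φ₀ + s * φ₁ := by
  have hβ : 0 < φ₁ - φ₀ := by nlinarith
  refine ⟨-φ₀ / (φ₁ - φ₀), ⟨?_, ?_⟩, le_of_eq ?_, fun s hs => ?_⟩
  · rw [le_div_iff₀ hβ]; linarith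
  · rw [div_lt_iff₀ hβ]; linarith
  · field_simp; ring
  · rw [div_lt_iff₀ hβ] at hs; linarith

lemma exists_optimal_rate (hb0 : 0 < b) (hb1 : b < 1) (hba : b < a)
    (hlo : Feasible b a C (bangBang a b l b)) (hhi : ¬ Feasible b a C (bangBang a b l a)) :
    ∃ r ∈ Set.Ico b a, Feasible b a C (bangBang a b l r) ∧
      ∀ σ, Feasible b a C σ → hsum σ ≤ hsum (bangBang a b l r) := by
  have hsumm r := summable_hseq_bangBang (a := a) (l := l) (r := r) hb0.le hb1
  set φ : ℝ → ℝ := fun r => ∑' j : ℕ, ((j : ℝ) - C) * hseq (bangBang a b l r) j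
  have hφ : ∀ r, φ r = (1 - r) * φ 0 + r * φ 1 := by
    have hw r : Summable fun j : ℕ => ((j : ℝ) - C) * hseq (bangBang a b l r) j := by
      simpa only [sub_mul] using (hsumm r).2.sub ((hsumm r).1.mul_left C)
    exact tsum_mul_hseq_bangBang (hw 0) (hw 1)
  have hfeas : ∀ r ∈ Set.Icc b a, Feasible b a C (bangBang a b l r) ↔ φ r ≤ 0 := fun r hr =>
    feasible_iff hb0.le (bangBang_mem hba.le hr) (hsumm r).1 (hsumm r).2
  obtain ⟨r, hr, hφr, hφgt⟩ := exists_threshold_of_affine hba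
    (by rw [← hφ]; exact (hfeas b ⟨le_rfl, hba.le⟩).1 hlo)
    (by rw [← hφ]; exact not_le.1 (mt (hfeas a ⟨hba.le, le_rfl⟩).2 hhi))
  refine ⟨r, hr, (hfeas r (Set.Ico_subset_Icc_self hr)).2 (hφ r ▸ hφr),
    fun σ hσ => not_lt.1 fun hlt => ?_⟩
  -- A rate slightly above `r` keeps `hsum` below `hsum σ`, hence is feasible, but `φ > 0` there.
  have hcont : Continuous fun s => hsum (bangBang a b l s) := by
    rw [funext (hsum_bangBang (a := a) (l := l) hb0.le hb1)]
    fun_prop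
  obtain ⟨s, hsσ, hrs, hsa⟩ := (((hcont.tendsto r).eventually_lt_const hlt).filter_mono
    nhdsWithin_le_nhds |>.and (Ioo_mem_nhdsGT hr.2)).exists
  have hs : s ∈ Set.Icc b a := ⟨hr.1.trans hrs.le, hsa.le⟩
  have hmean := mean_bangBang_le hb0 hb1 (hb0.le.trans hs.1) hσ.1 hσ.2.1 hσ.2.2.1 hsσ.le
  exact (hφ s ▸ hφgt s hrs).not_ge <| (hfeas s hs).1
    ⟨bangBang_mem hba.le hs, (hsumm s).1, summable_mul_piseq (hsumm s).2, hmean.trans hσ.2.2.2⟩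

lemma mul_one_sub_sum_range_le_tsum_mul {p : ℕ → ℝ} (hp0 : ∀ j, 0 ≤ p j) (hp : HasSum p 1)
    (hm : Summable fun j : ℕ => (j : ℝ) * p j) (K : ℕ) :
    K * (1 - ∑ j ∈ range K, p j) ≤ ∑' j : ℕ, (j : ℝ) * p j := by
  have htail : 1 - ∑ j ∈ range K, p j = ∑' k, p (k + K) := by
    rw [← hp.tsum_eq, ← hp.summable.sum_add_tsum_nat_add K]; ring
  have hhead : 0 ≤ ∑ j ∈ range K, (j : ℝ) * p j :=
    sum_nonneg fun j _ => mul_nonneg j.cast_nonneg (hp0 j)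
  have hle : ∑' k, (K : ℝ) * p (k + K) ≤ ∑' k : ℕ, ((k + K : ℕ) : ℝ) * p (k + K) :=
    Summable.tsum_le_tsum (fun k => mul_le_mul_of_nonneg_right (by simp) (hp0 _))
      (((summable_nat_add_iff K).2 hp.summable).mul_left _) ((summable_nat_add_iff K).2 hm)
  rw [htail, ← tsum_mul_left, ← hm.sum_add_tsum_nat_add K]
  linarith

lemma hsum_le_of_mean_le (hρ : ∀ i, 1 ≤ i → ρ i ∈ Set.Icc 0 a) (hs : Summable (hseq ρ))
    (hm : Summable fun i : ℕ => (i : ℝ) * piseq ρ i) (hmean : mean ρ ≤ C) {K : ℕ} (hK : C < K) :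
    hsum ρ ≤ K * (∑ j ∈ range K, a ^ j) / (K - C) := by
  have hρ0 i hi : 0 ≤ ρ i := (hρ i hi).1
  have hS := one_pos.trans_le (one_le_hsum hρ0 hs)
  have hhead : ∑ j ∈ range K, piseq ρ j ≤ (∑ j ∈ range K, a ^ j) / hsum ρ := by
    rw [sum_div]
    exact sum_le_sum fun j _ => div_le_div_of_nonneg_right (hseq_le_pow hρ j) hS.le
  have hmarkov : K * (1 - (∑ j ∈ range K, a ^ j) / hsum ρ) ≤ C :=
    calc _ ≤ K * (1 - ∑ j ∈ range K, piseq ρ j) :=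
          mul_le_mul_of_nonneg_left (by linarith) K.cast_nonneg
      _ ≤ mean ρ := mul_one_sub_sum_range_le_tsum_mul (piseq_nonneg hρ0) (hasSum_piseq hρ0 hs) hm K
      _ ≤ C := hmean
  have hexpand : K * (1 - (∑ j ∈ range K, a ^ j) / hsum ρ) * hsum ρ
      = K * hsum ρ - K * ∑ j ∈ range K, a ^ j := by
    field_simp
  rw [le_div_iff₀ (by linarith)]
  linarith [mul_le_mul_of_nonneg_right hmarkov hS.le]

lemma lt_one_of_forall_feasible_bangBang (hb0 : 0 < b) (hba : b < a)
    (hall : ∀ l, Feasible b a C (bangBang a b l b)) : a < 1 := by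
  obtain ⟨K, hK⟩ := exists_nat_gt C
  have hbound n : ∑ j ∈ range n, a ^ j ≤ K * (∑ j ∈ range K, a ^ j) / (K - C) := by
    have hρ := mem_Icc_zero_of_mem_Icc hb0.le (bangBang_mem (l := n) hba.le ⟨le_rfl, hba.le⟩)
    calc ∑ j ∈ range n, a ^ j = ∑ j ∈ range n, hseq (bangBang a b n b) j :=
          sum_congr rfl fun j hj => (hseq_bangBang_of_le (mem_range.1 hj).le).symm
      _ ≤ hsum (bangBang a b n b) :=
          (hall n).2.1.sum_le_tsum _ fun j _ => hseq_nonneg (fun i hi => (hρ i hi).1) j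
      _ ≤ _ := hsum_le_of_mean_le hρ (hall n).2.1 (hall n).2.2.1 (hall n).2.2.2 hK
  have hgeom := summable_of_sum_range_le (fun n => pow_nonneg (hb0.trans hba).le n) hbound
  simpa [abs_of_pos (hb0.trans hba)] using summable_geometric_iff_norm_lt_one.1 hgeom

lemma feasible_const_of_forall_feasible_bangBang (hb0 : 0 < b) (hba : b < a)
    (hall : ∀ l, Feasible b a C (bangBang a b l b)) : Feasible b a C fun _ => a := by
  have ha0 : 0 ≤ a := (hb0.trans hba).le
  have ha1 := lt_one_of_forall_feasible_bangBang hb0 hba hall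
  have hs : Summable (hseq fun _ => a) := by
    simpa only [funext (hseq_const a)] using summable_geometric_of_lt_one ha0 ha1
  have hm : Summable fun j : ℕ => (j : ℝ) * hseq (fun _ => a) j := by
    simpa [hseq_const] using
      summable_pow_mul_geometric_of_norm_lt_one 1 (by rwa [Real.norm_of_nonneg ha0])
  refine ⟨fun _ _ => ⟨hba.le, le_rfl⟩, hs, summable_mul_piseq hm,
    Real.tsum_le_of_sum_range_le
      (fun j => mul_nonneg j.cast_nonneg (piseq_nonneg (fun _ _ => ha0) j)) fun n => ?_⟩
  have hρ := mem_Icc_zero_of_mem_Icc hb0.le (bangBang_mem (l := n) hba.le ⟨le_rfl, hba.le⟩)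
  have hρ0 i hi : 0 ≤ bangBang a b n b i := (hρ i hi).1
  have hS := hsum_le_hsum_const hρ (hall n).2.1 hs
  calc ∑ j ∈ range n, (j : ℝ) * piseq (fun _ => a) j
      ≤ ∑ j ∈ range n, (j : ℝ) * piseq (bangBang a b n b) j := by
        refine sum_le_sum fun j hj => mul_le_mul_of_nonneg_left ?_ j.cast_nonneg
        rw [piseq, piseq, hseq_const, hseq_bangBang_of_le (mem_range.1 hj).le]
        exact div_le_div_of_nonneg_left (pow_nonneg ha0 j)
          (one_pos.trans_le (one_le_hsum hρ0 (hall n).2.1)) hS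
    _ ≤ mean (bangBang a b n b) := (hall n).2.2.1.sum_le_tsum _ fun j _ =>
        mul_nonneg j.cast_nonneg (piseq_nonneg hρ0 j)
    _ ≤ C := (hall n).2.2.2

lemma hseq_bangBang_zero_self (j : ℕ) : hseq (bangBang a b 0 b) j = b ^ j := by
  rcases j with _ | k
  · simp
  · simpa [pow_succ, mul_comm] using hseq_bangBang_add (a := a) (b := b) (l := 0) (r := b) k

lemma feasible_bangBang_zero_self (hb0 : 0 < b) (hb1 : b < 1) (hba : b < a)
    (hC : b / (1 - b) ≤ C) : Feasible b a C (bangBang a b 0 b) := by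
  obtain ⟨hs, hm⟩ := summable_hseq_bangBang (a := a) (l := 0) (r := b) hb0.le hb1
  rw [feasible_iff hb0.le (bangBang_mem hba.le ⟨le_rfl, hba.le⟩) hs hm]
  have h : HasSum (fun j : ℕ => ((j : ℝ) - C) * b ^ j) (b / (1 - b) ^ 2 - C * (1 - b)⁻¹) := by
    have h1 : HasSum (fun j : ℕ => (j : ℝ) * b ^ j) (b / (1 - b) ^ 2) :=
      hasSum_coe_mul_geometric_of_norm_lt_one (by rwa [Real.norm_of_nonneg hb0.le])
    simpa only [sub_mul] using h1.sub ((hasSum_geometric_of_lt_one hb0.le hb1).mul_left C)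
  simp only [hseq_bangBang_zero_self, h.tsum_eq]
  have h1b : 0 < 1 - b := by linarith
  rw [div_le_iff₀ h1b] at hC
  have e : b / (1 - b) ^ 2 - C * (1 - b)⁻¹ = (b - C * (1 - b)) / (1 - b) ^ 2 := by
    field_simp
  rw [e]
  exact div_nonpos_of_nonpos_of_nonneg (by linarith) (by positivity)

lemma bangBang_shape (a b : ℝ) (l : ℕ) (r : ℝ) (i : ℕ) :
    ((i : ℕ∞) < (l + 1 : ℕ) → bangBang a b l r i = a) ∧
      ((i : ℕ∞) = (l + 1 : ℕ) → bangBang a b l r i = r) ∧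
      (((l + 1 : ℕ) : ℕ∞) < i → bangBang a b l r i = b) := by
  simp only [Nat.cast_lt, Nat.cast_inj, bangBang]
  refine ⟨fun h => if_pos (by omega), fun h => ?_, fun h => ?_⟩
  · rw [if_neg (by omega), if_pos h]
  · rw [if_neg (by omega), if_neg (by omega)]

lemma piseq_zero_le_of_hsum_le (hb : 0 ≤ b) (hσ : Feasible b a C σ) (h : hsum σ ≤ hsum ρ) :
    piseq ρ 0 ≤ piseq σ 0 := by
  rw [piseq_zero, piseq_zero]
  exact inv_anti₀ (one_pos.trans_le
    (one_le_hsum (fun i hi => (mem_Icc_zero_of_mem_Icc hb hσ.1 i hi).1) hσ.2.1)) h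

end BirthDeath

open BirthDeath in
/-- Let `0 < ρ̲ < ρ̄`, `ρ̲ < 1` and `ρ̲/(1-ρ̲) ≤ C`. For the
problem of minimizing `π_0` over all sequences `(ρ_i)_{i≥1}` with
`ρ_i ∈ [ρ̲, ρ̄]`, subject to `∑_j h_j < ∞` and `∑_i i π_i ≤ C`, an optimal
solution exists of bang-bang form: for some `ℓ* ∈ ℕ ∪ {∞}` and
`r* ∈ [ρ̲, ρ̄]`, `ρ_i = ρ̄` for `i < ℓ*`, `ρ_i = r*` for `i = ℓ*`, and
`ρ_i = ρ̲` for `i > ℓ*`. -/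
theorem stmt2 (rlo rhi C : ℝ) (h0 : 0 < rlo) (hlt : rlo < rhi) (h1 : rlo < 1)
    (hC : rlo / (1 - rlo) ≤ C) :
    ∃ ρ : ℕ → ℝ, Feasible rlo rhi C ρ ∧
      (∃ ℓ : ℕ∞, ∃ r ∈ Set.Icc rlo rhi, ∀ i : ℕ, 1 ≤ i →
        (((i : ℕ∞) < ℓ → ρ i = rhi) ∧
         ((i : ℕ∞) = ℓ → ρ i = r) ∧
         (ℓ < (i : ℕ∞) → ρ i = rlo))) ∧
      ∀ σ : ℕ → ℝ, Feasible rlo rhi C σ → piseq ρ 0 ≤ piseq σ 0 := by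
  by_cases hall : ∀ l, Feasible rlo rhi C (bangBang rhi rlo l rlo)
  · have hfeas := feasible_const_of_forall_feasible_bangBang h0 hlt hall
    refine ⟨fun _ => rhi, hfeas, ⟨⊤, rlo, ⟨le_rfl, hlt.le⟩, fun i _ => ?_⟩, fun σ hσ => ?_⟩
    · exact ⟨fun _ => rfl, fun h => absurd h (ENat.natCast_ne_top i), fun h => absurd h not_top_lt⟩
    · exact piseq_zero_le_of_hsum_le h0.le hσ
        (hsum_le_hsum_const (mem_Icc_zero_of_mem_Icc h0.le hσ.1) hσ.2.1 hfeas.2.1)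
  obtain ⟨l, hl, hl1⟩ : ∃ l, Feasible rlo rhi C (bangBang rhi rlo l rlo) ∧
      ¬ Feasible rlo rhi C (bangBang rhi rlo (l + 1) rlo) := by
    by_contra! hstep
    refine hall fun n => ?_
    induction n with
    | zero => exact feasible_bangBang_zero_self h0 h1 hlt hC
    | succ k ih => exact hstep k ih
  rw [← bangBang_top] at hl1
  obtain ⟨r, hr, hfeas, hmax⟩ := exists_optimal_rate h0 h1 hlt hl hl1
  exact ⟨_, hfeas, ⟨(l + 1 : ℕ), r, Set.Ico_subset_Icc_self hr,
    fun i _ => bangBang_shape _ _ _ _ i⟩, fun σ hσ => piseq_zero_le_of_hsum_le h0.le hσ (hmax σ hσ)⟩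
end

section
/- If ρ̄ < 1 and ρ̄/(1 − ρ̄) ≤ C, then the constant sequence ρ_i = ρ̄ for all i ≥ 1 is optimal for the problem of minimizing π_0 subject to ρ_i ∈ [ρ̲, ρ̄] and ∑_{i=0}^∞ i π_i ≤ C: it is feasible, and for every feasible sequence (ρ_i) with ρ_i ≤ ρ̄ for all i, one has π_0 ≥ 1 − ρ̄, with equality for the constant sequence. -/
/-!
Since `h_i = ρ_1 ⋯ ρ_i`, the bound `ρ_i ≤ ρ̄` gives `h_i ≤ ρ̄ ^ i`, hence
`∑ h_i ≤ 1 / (1 - ρ̄)` and `π_0 = 1 / ∑ h_i ≥ 1 - ρ̄`. For the constant sequence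
`h_i = ρ̄ ^ i` and `π` is the geometric distribution `π_i = (1 - ρ̄) ρ̄ ^ i`, with
`π_0 = 1 - ρ̄` and mean `ρ̄ / (1 - ρ̄)`.
-/

@[simp]
lemma hseq_zero (ρ : ℕ → ℝ) : hseq ρ 0 = 1 := by
  simp [hseq]

lemma hseq_const (r : ℝ) (i : ℕ) : hseq (fun _ => r) i = r ^ i := by
  simp [hseq, Nat.card_Icc]

section Bounded

variable {ρ : ℕ → ℝ} {r : ℝ}

lemma hseq_nonneg (hρ : ∀ i, 1 ≤ i → 0 ≤ ρ i) (i : ℕ) : 0 ≤ hseq ρ i :=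
  Finset.prod_nonneg fun j hj => hρ j (Finset.mem_Icc.mp hj).1

lemma hseq_le_pow (hρ : ∀ i, 1 ≤ i → ρ i ∈ Set.Icc 0 r) (i : ℕ) :
    hseq ρ i ≤ r ^ i := by
  calc hseq ρ i ≤ ∏ _j ∈ Finset.Icc 1 i, r :=
        Finset.prod_le_prod (fun j hj => (hρ j (Finset.mem_Icc.mp hj).1).1)
          fun j hj => (hρ j (Finset.mem_Icc.mp hj).1).2
    _ = r ^ i := by simp [Nat.card_Icc]

lemma one_le_tsum_hseq (hρ : ∀ i, 1 ≤ i → 0 ≤ ρ i) (hs : Summable (hseq ρ)) :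
    1 ≤ ∑' i, hseq ρ i := by
  simpa using hs.le_tsum 0 fun j _ => hseq_nonneg hρ j

lemma tsum_hseq_le (hρ : ∀ i, 1 ≤ i → ρ i ∈ Set.Icc 0 r) (hr : r < 1)
    (hs : Summable (hseq ρ)) : ∑' i, hseq ρ i ≤ (1 - r)⁻¹ := by
  have hr0 : 0 ≤ r := (hρ 1 le_rfl).1.trans (hρ 1 le_rfl).2
  calc ∑' i, hseq ρ i ≤ ∑' i : ℕ, r ^ i :=
        hs.tsum_le_tsum (hseq_le_pow hρ) (summable_geometric_of_lt_one hr0 hr)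
    _ = (1 - r)⁻¹ := tsum_geometric_of_lt_one hr0 hr

lemma one_sub_le_piseq_zero (hρ : ∀ i, 1 ≤ i → ρ i ∈ Set.Icc 0 r) (hr : r < 1)
    (hs : Summable (hseq ρ)) : 1 - r ≤ piseq ρ 0 := by
  have hS : 0 < ∑' i, hseq ρ i :=
    one_pos.trans_le (one_le_tsum_hseq (fun i hi => (hρ i hi).1) hs)
  rw [piseq, hseq_zero, le_div_iff₀ hS, ← le_div_iff₀' (by linarith), one_div]
  exact tsum_hseq_le hρ hr hs

end Bounded

section Constant

variable {r : ℝ}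

lemma piseq_const (hr0 : 0 ≤ r) (hr : r < 1) (i : ℕ) :
    piseq (fun _ => r) i = r ^ i * (1 - r) := by
  have hr' : 1 - r ≠ 0 := by linarith
  simp only [piseq, hseq_const, tsum_geometric_of_lt_one hr0 hr]
  field_simp

lemma hasSum_mul_piseq_const (hr0 : 0 ≤ r) (hr : r < 1) :
    HasSum (fun i : ℕ => (i : ℝ) * piseq (fun _ => r) i) (r / (1 - r)) := by
  have hnorm : ‖r‖ < 1 := by rwa [Real.norm_of_nonneg hr0]
  have hr' : 1 - r ≠ 0 := by linarith
  have hf : (fun i : ℕ => (i : ℝ) * piseq (fun _ => r) i) =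
      fun i : ℕ => (i : ℝ) * r ^ i * (1 - r) := by
    ext i
    rw [piseq_const hr0 hr, mul_assoc]
  rw [hf, show r / (1 - r) = r / (1 - r) ^ 2 * (1 - r) by field_simp]
  exact (hasSum_coe_mul_geometric_of_norm_lt_one hnorm).mul_right (1 - r)

end Constant

theorem stmt5_general (rlo rhi C : ℝ) (h0 : 0 < rlo) (hlt : rlo < rhi) (h1 : rhi < 1)
    (hC : rhi / (1 - rhi) ≤ C) :
    (Summable (hseq (fun _ => rhi)) ∧
      Summable (fun i : ℕ => (i : ℝ) * piseq (fun _ => rhi) i) ∧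
      (∑' i : ℕ, (i : ℝ) * piseq (fun _ => rhi) i) = rhi / (1 - rhi) ∧
      (∑' i : ℕ, (i : ℝ) * piseq (fun _ => rhi) i) ≤ C ∧
      piseq (fun _ => rhi) 0 = 1 - rhi) ∧
    ∀ ρ : ℕ → ℝ, (∀ i : ℕ, 1 ≤ i → ρ i ∈ Set.Icc rlo rhi) →
      Summable (hseq ρ) →
      Summable (fun i : ℕ => (i : ℝ) * piseq ρ i) →
      (∑' i : ℕ, (i : ℝ) * piseq ρ i) ≤ C →
      1 - rhi ≤ piseq ρ 0 := by
  have hrhi : 0 ≤ rhi := (h0.trans hlt).le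
  have hmean := hasSum_mul_piseq_const hrhi h1
  refine ⟨⟨?_, hmean.summable, hmean.tsum_eq, hmean.tsum_eq ▸ hC, ?_⟩, ?_⟩
  · exact funext (hseq_const rhi) ▸ summable_geometric_of_lt_one hrhi h1
  · simpa using piseq_const hrhi h1 0
  · intro ρ hρ hs _ _
    exact one_sub_le_piseq_zero
      (fun i hi => ⟨h0.le.trans (hρ i hi).1, (hρ i hi).2⟩) h1 hs

/-- If `ρ̄ < 1` and `ρ̄/(1-ρ̄) ≤ C`, then the constant
sequence `ρ_i = ρ̄` is optimal for minimizing `π_0` subject to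
`ρ_i ∈ [ρ̲, ρ̄]` and `∑_i i π_i ≤ C`: it is feasible (positive recurrent,
with stationary mean `ρ̄/(1-ρ̄) ≤ C`), its `π_0` equals `1 - ρ̄`,
and every feasible sequence with `ρ_i ≤ ρ̄` satisfies `π_0 ≥ 1 - ρ̄`. -/
theorem stmt5 (rlo rhi C : ℝ) (h0 : 0 < rlo) (hlt : rlo < rhi) (h1 : rhi < 1)
    (hCpos : 0 < C) (hC : rhi / (1 - rhi) ≤ C) :
    (Summable (hseq (fun _ => rhi)) ∧
      Summable (fun i : ℕ => (i : ℝ) * piseq (fun _ => rhi) i) ∧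
      (∑' i : ℕ, (i : ℝ) * piseq (fun _ => rhi) i) = rhi / (1 - rhi) ∧
      (∑' i : ℕ, (i : ℝ) * piseq (fun _ => rhi) i) ≤ C ∧
      piseq (fun _ => rhi) 0 = 1 - rhi) ∧
    ∀ ρ : ℕ → ℝ, (∀ i : ℕ, 1 ≤ i → ρ i ∈ Set.Icc rlo rhi) →
      Summable (hseq ρ) →
      Summable (fun i : ℕ => (i : ℝ) * piseq ρ i) →
      (∑' i : ℕ, (i : ℝ) * piseq ρ i) ≤ C →
      1 - rhi ≤ piseq ρ 0 :=
  stmt5_general rlo rhi C h0 hlt h1 hC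
end

section
/- Let β, α, w̃ > 0 and θ ∈ (0,1]. The function p ↦ p − w̃/(β − αp)^θ, defined on {p : β − αp > 0}, attains its maximum value (β − B)/α, where B := (w̃ α θ)^{1/(θ+1)} (1 + 1/θ). Consequently, max_{p} ( p − w̃/(β − αp)^θ ) = β/α − B/α. -/
/-!
With `x = β - αp > 0` the objective is `(β - (x + αw̃ / x^θ)) / α`, so the claim is that
`f x = x + c / x^θ` with `c = αw̃` is minimised on `x > 0` at `s = (cθ)^(1/(θ+1))`, where
`c = s^(θ+1)/θ` and `f s = s (1 + 1/θ) = B`. Writing `x = s u`, this reduces to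
`θ + 1 ≤ θ u + u^(-θ)`, which is weighted AM-GM for `u` and `u^(-θ)` with weights `θ : 1`.
-/

open Real Set

theorem add_one_le_mul_add_rpow_neg {t u : ℝ} (ht : 0 < t) (hu : 0 < u) :
    t + 1 ≤ t * u + u ^ (-t) := by
  have hamgm := geom_mean_le_arith_mean2_weighted (w₁ := t / (t + 1)) (w₂ := 1 / (t + 1))
    (by positivity) (by positivity) hu.le (rpow_nonneg hu.le (-t)) (by field_simp)
  have hgm : u ^ (t / (t + 1)) * (u ^ (-t)) ^ (1 / (t + 1)) = 1 := by
    rw [← rpow_mul hu.le, ← rpow_add hu]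
    convert rpow_zero u using 2
    ring
  have ham : t / (t + 1) * u + 1 / (t + 1) * u ^ (-t) = (t * u + u ^ (-t)) / (t + 1) := by
    field_simp
  rw [hgm, ham, le_div_iff₀ (by positivity)] at hamgm
  linarith

theorem add_div_rpow_self {s : ℝ} (t : ℝ) (hs : 0 < s) :
    s + s ^ (t + 1) / t / s ^ t = s * (1 + 1 / t) := by
  rw [rpow_add_one hs.ne']
  field_simp

theorem isMinOn_add_div_rpow {s t : ℝ} (hs : 0 < s) (ht : 0 < t) :
    IsMinOn (fun x ↦ x + s ^ (t + 1) / t / x ^ t) (Ioi 0) s := by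
  intro x (hx : 0 < x)
  have hu : 0 < x / s := div_pos hx hs
  have hval : x + s ^ (t + 1) / t / x ^ t = s * ((t * (x / s) + (x / s) ^ (-t)) / t) := by
    rw [rpow_neg hu.le, div_rpow hx.le hs.le, rpow_add_one hs.ne']
    field_simp
  show s + s ^ (t + 1) / t / s ^ t ≤ x + s ^ (t + 1) / t / x ^ t
  rw [hval, add_div_rpow_self t hs, one_add_div ht.ne']
  gcongr s * (?_ / t)
  exact add_one_le_mul_add_rpow_neg ht hu

theorem stmt13_general (beta alpha wt theta : ℝ)
    (ha : 0 < alpha) (hw : 0 < wt)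
    (htheta : theta ∈ Set.Ioc (0 : ℝ) 1)
    (B : ℝ) (hB : B = (wt * alpha * theta) ^ (1 / (theta + 1)) * (1 + 1 / theta)) :
    (∃ p : ℝ, 0 < beta - alpha * p ∧
      p - wt / ((beta - alpha * p) ^ theta) = (beta - B) / alpha ∧
      ∀ q : ℝ, 0 < beta - alpha * q →
        q - wt / ((beta - alpha * q) ^ theta) ≤ (beta - B) / alpha) ∧
    (beta - B) / alpha = beta / alpha - B / alpha := by
  obtain ⟨hθ, -⟩ := htheta
  set s := (wt * alpha * theta) ^ (1 / (theta + 1))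
  have hs : 0 < s := by positivity
  have hcoef : s ^ (theta + 1) / theta = alpha * wt := by
    rw [← rpow_mul (by positivity), one_div_mul_cancel (by positivity), rpow_one]
    field_simp
  set f := fun x : ℝ ↦ x + s ^ (theta + 1) / theta / x ^ theta
  have hfB : f s = B := by rw [hB, ← add_div_rpow_self theta hs]
  have hprofit : ∀ q, q - wt / (beta - alpha * q) ^ theta = (beta - f (beta - alpha * q)) / alpha := by
    intro q
    simp only [f, hcoef]
    field_simp
    ring
  have hps : beta - alpha * ((beta - s) / alpha) = s := by field_simp; ring
  refine ⟨⟨(beta - s) / alpha, by rw [hps]; exact hs, by rw [hprofit, hps, hfB], fun q hq ↦ ?_⟩,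
    sub_div _ _ _⟩
  rw [hprofit, ← hfB]
  gcongr
  exact isMinOn_add_div_rpow hs hθ hq

/-- Let `β, α, w̃ > 0` and `θ ∈ (0,1]`. The function
`p ↦ p - w̃/(β - αp)^θ`, defined on `{p : β - αp > 0}`, attains its maximum
value `(β - B)/α`, where `B = (w̃ α θ)^{1/(θ+1)} (1 + 1/θ)`. Consequently,
`max_p (p - w̃/(β - αp)^θ) = β/α - B/α`. -/
theorem stmt13 (beta alpha wt theta : ℝ)
    (hb : 0 < beta) (ha : 0 < alpha) (hw : 0 < wt)
    (htheta : theta ∈ Set.Ioc (0 : ℝ) 1)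
    (B : ℝ) (hB : B = (wt * alpha * theta) ^ (1 / (theta + 1)) * (1 + 1 / theta)) :
    (∃ p : ℝ, 0 < beta - alpha * p ∧
      p - wt / ((beta - alpha * p) ^ theta) = (beta - B) / alpha ∧
      ∀ q : ℝ, 0 < beta - alpha * q →
        q - wt / ((beta - alpha * q) ^ theta) ≤ (beta - B) / alpha) ∧
    (beta - B) / alpha = beta / alpha - B / alpha :=
  stmt13_general beta alpha wt theta ha hw htheta B hB
end

section
/- Let X be a real-valued random variable with mean m = E[X], variance σ² = Var(X) > 0, and moment generating function finite in a neighborhood of 0. For δ > 0 small enough, let τ*(δ) > 0 denote a root of the equation log E[exp(−τ X)] + τ(m − δ) = 0 with τ*(δ) → 0 as δ → 0⁺. Then lim_{δ → 0⁺} τ*(δ)/δ = 2/σ²; that is, τ*(δ) = (2δ)/σ² + o(δ) as δ → 0⁺. -/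
/-!
The root equation says `cgf X (-τ) + τ m = τ δ`. The cumulant generating function is analytic
at `0` with `cgf 0 = 0`, `cgf' 0 = m` and `cgf'' 0 = σ²`, so by Taylor's theorem
`(cgf X t - m t) / t² → σ² / 2` as `t → 0`. At `t = -τ(δ) → 0` the left side is `δ / τ(δ)`.
-/

open MeasureTheory ProbabilityTheory Filter Topology Set

theorem tendsto_sub_sub_div_sq_iteratedDeriv_two {f : ℝ → ℝ} {x₀ : ℝ} (hf : ContDiffAt ℝ 2 f x₀) :
    Tendsto (fun x ↦ (f x - f x₀ - deriv f x₀ * (x - x₀)) / (x - x₀) ^ 2) (𝓝[≠] x₀)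
      (𝓝 (iteratedDeriv 2 f x₀ / 2)) := by
  obtain ⟨u, hu, hfu⟩ := hf.contDiffOn le_rfl (by simp)
  obtain ⟨ε, hε, hεu⟩ := Metric.mem_nhds_iff.1 hu
  have hball := Metric.isOpen_ball (x := x₀) (ε := ε)
  have hTaylor := Real.taylor_tendsto (convex_ball x₀ ε) (Metric.mem_ball_self hε) (hfu.mono hεu)
  rw [hball.nhdsWithin_eq (Metric.mem_ball_self hε)] at hTaylor
  have hlim := (hTaylor.mono_left (nhdsWithin_le_nhds (s := {x₀}ᶜ))).add_const
    (iteratedDeriv 2 f x₀ / 2)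
  rw [zero_add] at hlim
  refine hlim.congr' ?_
  filter_upwards [self_mem_nhdsWithin] with x hx
  have hx : x - x₀ ≠ 0 := sub_ne_zero.2 hx
  simp only [taylor_within_apply, Finset.sum_range_succ, Finset.sum_range_zero,
    iteratedDerivWithin_of_isOpen hball (Metric.mem_ball_self hε), iteratedDeriv_zero,
    iteratedDeriv_one]
  field_simp
  norm_num [Nat.factorial]
  ring

section Cgf

variable {Ω : Type*} [MeasurableSpace Ω] {μ : Measure Ω} {X : Ω → ℝ}

lemma zero_mem_interior_integrableExpSet_of_forall_abs_le {c : ℝ} (hc : 0 < c)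
    (h : ∀ t : ℝ, |t| ≤ c → Integrable (fun ω ↦ Real.exp (t * X ω)) μ) :
    0 ∈ interior (integrableExpSet X μ) :=
  mem_interior_iff_mem_nhds.2 <| Filter.mem_of_superset (Icc_mem_nhds (neg_lt_zero.2 hc) hc)
    fun t ht ↦ h t (abs_le.2 ht)

lemma iteratedDeriv_two_cgf_zero [IsProbabilityMeasure μ]
    (h : 0 ∈ interior (integrableExpSet X μ)) : iteratedDeriv 2 (cgf X μ) 0 = Var[X; μ] := by
  rw [iteratedDeriv_two_cgf_eq_integral h, deriv_cgf_zero h,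
    variance_eq_integral (aemeasurable_of_mem_interior_integrableExpSet h)]
  simp

lemma tendsto_cgf_sub_mul_div_sq [IsProbabilityMeasure μ]
    (h : 0 ∈ interior (integrableExpSet X μ)) :
    Tendsto (fun t ↦ (cgf X μ t - μ[X] * t) / t ^ 2) (𝓝[≠] 0) (𝓝 (Var[X; μ] / 2)) := by
  have := tendsto_sub_sub_div_sq_iteratedDeriv_two (analyticAt_cgf h).contDiffAt
  simpa [cgf_zero, deriv_cgf_zero h, iteratedDeriv_two_cgf_zero h] using this

end Cgf

theorem stmt17_general {Ω : Type*} [MeasureSpace Ω] [IsProbabilityMeasure (ℙ : Measure Ω)]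
    (X : Ω → ℝ)
    (hmgf : ∃ c > (0 : ℝ), ∀ t : ℝ, |t| ≤ c →
      Integrable (fun ω => Real.exp (t * X ω)) ℙ)
    (m : ℝ) (hm : m = ∫ ω, X ω ∂ℙ)
    (hvar : 0 < ProbabilityTheory.variance X ℙ)
    (δ₀ : ℝ) (hδ₀ : 0 < δ₀) (τ : ℝ → ℝ)
    (hτpos : ∀ δ ∈ Set.Ioo (0 : ℝ) δ₀, 0 < τ δ)
    (hτroot : ∀ δ ∈ Set.Ioo (0 : ℝ) δ₀,
      Real.log (∫ ω, Real.exp (-(τ δ) * X ω) ∂ℙ) + τ δ * (m - δ) = 0)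
    (hτlim : Tendsto τ (nhdsWithin 0 (Set.Ioi 0)) (nhds 0)) :
    Tendsto (fun δ => τ δ / δ) (nhdsWithin 0 (Set.Ioi 0))
      (nhds (2 / ProbabilityTheory.variance X ℙ)) := by
  obtain ⟨c, hc, hint⟩ := hmgf
  have hsmall : ∀ᶠ δ in 𝓝[>] (0 : ℝ), δ ∈ Ioo 0 δ₀ := Ioo_mem_nhdsGT hδ₀
  have hnegτ : Tendsto (fun δ ↦ -τ δ) (𝓝[>] 0) (𝓝[≠] 0) := by
    refine tendsto_nhdsWithin_iff.2 ⟨by simpa using hτlim.neg, ?_⟩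
    filter_upwards [hsmall] with δ hδ using neg_ne_zero.2 (hτpos δ hδ).ne'
  have hcgf := (tendsto_cgf_sub_mul_div_sq
    (zero_mem_interior_integrableExpSet_of_forall_abs_le hc hint)).comp hnegτ
  have hratio : Tendsto (fun δ ↦ δ / τ δ) (𝓝[>] 0) (𝓝 (Var[X; ℙ] / 2)) := by
    refine hcgf.congr' ?_
    filter_upwards [hsmall] with δ hδ
    have hroot : cgf X ℙ (-τ δ) - m * -τ δ = τ δ * δ := by
      rw [cgf, mgf]; linarith [hτroot δ hδ]
    simp only [Function.comp_apply, ← hm, hroot, neg_sq]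
    field_simp [(hτpos δ hδ).ne']
  simpa using hratio.inv₀ (by positivity)

/-- Let `X` be a real random variable with mean `m`,
variance `σ² > 0`, and moment generating function finite in a neighborhood of
`0`. For `δ > 0` small enough, let `τ*(δ) > 0` be a root of
`log E[exp(-τ X)] + τ (m - δ) = 0`, with `τ*(δ) → 0` as `δ → 0⁺`. Then
`lim_{δ → 0⁺} τ*(δ)/δ = 2/σ²`, i.e. `τ*(δ) = 2δ/σ² + o(δ)`. -/
theorem stmt17 {Ω : Type*} [MeasureSpace Ω] [IsProbabilityMeasure (ℙ : Measure Ω)]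
    (X : Ω → ℝ) (hX : Measurable X)
    (hmgf : ∃ c > (0 : ℝ), ∀ t : ℝ, |t| ≤ c →
      Integrable (fun ω => Real.exp (t * X ω)) ℙ)
    (m : ℝ) (hm : m = ∫ ω, X ω ∂ℙ)
    (hvar : 0 < ProbabilityTheory.variance X ℙ)
    (δ₀ : ℝ) (hδ₀ : 0 < δ₀) (τ : ℝ → ℝ)
    (hτpos : ∀ δ ∈ Set.Ioo (0 : ℝ) δ₀, 0 < τ δ)
    (hτroot : ∀ δ ∈ Set.Ioo (0 : ℝ) δ₀,
      Real.log (∫ ω, Real.exp (-(τ δ) * X ω) ∂ℙ) + τ δ * (m - δ) = 0)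
    (hτlim : Tendsto τ (nhdsWithin 0 (Set.Ioi 0)) (nhds 0)) :
    Tendsto (fun δ => τ δ / δ) (nhdsWithin 0 (Set.Ioi 0))
      (nhds (2 / ProbabilityTheory.variance X ℙ)) :=
  stmt17_general X hmgf m hm hvar δ₀ hδ₀ τ hτpos hτroot hτlim
end
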